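/- Let Γ be a finite directed graph with edge labels ≥ 3 containing no triangles. Then every embedded cycle of length 6 in the link L_Γ contains at least 2 middle edges. -/

import Mathlib

/-- The generators of the presentation `I_Γ` associated with a directed labeled graph
`Γ` on vertex set `ι`: a generator `xgen i j` for each directed edge `i → j`, a
generator `vgen i` for each vertex `i`, and generators `dgen i j k` (`3 ≤ k ≤ label`)
for each directed edge `i → j`. -/
inductive GammaGen (ι : Type*) where
  | xgen (i j : ι)
  | vgen (i : ι)
  | dgen (i j : ι) (k : ℕ)

/-- `gSeq i j k` is the generator `d_k` of the local piece of the edge `i → j`, where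
`d₁ = a_i`, `d₂ = a_j`, and `d_k` (`k ≥ 3`) are the extra generators. -/
def gSeq {ι : Type*} (i j : ι) (k : ℕ) : GammaGen ι :=
  if k = 1 then .vgen i else if k = 2 then .vgen j else .dgen i j k

/-- The triples `(w, g, h)` such that `w = g·h` is a relation of `I_Γ`: for each
directed edge `i → j` with label `m`, the cyclic relations `x_{ij} = d_k d_{k+1}`
(`1 ≤ k ≤ m`, indices mod `m`). -/
def relTriplesGamma {ι : Type*} (E : ι → ι → Prop) (lab : ι → ι → ℕ) :
    Set (GammaGen ι × GammaGen ι × GammaGen ι) :=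
  {t | ∃ i j, E i j ∧ ∃ k : ℕ, 1 ≤ k ∧ k ≤ lab i j ∧
        t = (.xgen i j, gSeq i j k, gSeq i j (k % lab i j + 1))}

/-- Vertices of the link `L_Γ`: a pair of vertices for each generator of `I_Γ`;
the Boolean is `true` for the barred vertex. -/
abbrev GammaVert (ι : Type*) := GammaGen ι × Bool

/-- Each relation `w = g·h` contributes the corner edges `{ḡ, h}`, `{w, g}`,
`{h̄, w̄}` to the link. -/
def linkRelGamma {ι : Type*} (E : ι → ι → Prop) (lab : ι → ι → ℕ)
    (u v : GammaVert ι) : Prop :=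
  ∃ t ∈ relTriplesGamma E lab,
    ((u, v) = ((t.2.1, true), (t.2.2, false)) ∨
     (u, v) = ((t.1, false), (t.2.1, false)) ∨
     (u, v) = ((t.2.2, true), (t.1, true)))

/-- The link `L_Γ` of the unique 0-cell of the 2-complex `K_Γ`. -/
def LinkGamma {ι : Type*} (E : ι → ι → Prop) (lab : ι → ι → ℕ) :
    SimpleGraph (GammaVert ι) :=
  SimpleGraph.fromRel (linkRelGamma E lab)

/-- Levels of link vertices: barred `x`-generators at level 1, barred others at
level 2, unbarred others at level 3, unbarred `x`-generators at level 4. -/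
def lvlGamma {ι : Type*} : GammaVert ι → ℕ
  | (.xgen _ _, true) => 1
  | (.xgen _ _, false) => 4
  | (_, true) => 2
  | (_, false) => 3

/-- A link edge is a middle edge when it joins a level-2 vertex to a level-3 vertex. -/
def IsMiddle {ι : Type*} (u v : GammaVert ι) : Prop :=
  (lvlGamma u = 2 ∧ lvlGamma v = 3) ∨ (lvlGamma u = 3 ∧ lvlGamma v = 2)

/-- Forbidden configuration of type A: a triangle of `Γ` with two edges oriented out
of a common vertex (equivalently, a triangle containing a directed path of length 2
whose third edge closes it up non-cyclically; both orientations of the third edge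
give isomorphic oriented graphs). -/
def TypeA {ι : Type*} (E : ι → ι → Prop) : Prop :=
  ∃ u v w : ι, u ≠ v ∧ u ≠ w ∧ v ≠ w ∧ E w u ∧ E w v ∧ (E u v ∨ E v u)

/-- Forbidden configuration of type B: four distinct vertices forming a 4-cycle with
alternating orientations. -/
def TypeB {ι : Type*} (E : ι → ι → Prop) : Prop :=
  ∃ p q r s : ι, p ≠ q ∧ p ≠ r ∧ p ≠ s ∧ q ≠ r ∧ q ≠ s ∧ r ≠ s ∧
    E q p ∧ E q r ∧ E s p ∧ E s r

/-- `Γ` contains no triangles (as an undirected graph). -/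
def TriangleFree {ι : Type*} (E : ι → ι → Prop) : Prop :=
  ¬∃ u v w : ι, u ≠ v ∧ u ≠ w ∧ v ≠ w ∧
    (E u v ∨ E v u) ∧ (E v w ∨ E w v) ∧ (E u w ∨ E w u)

instance {ι : Type*} (u v : GammaVert ι) : Decidable (IsMiddle u v) := by
  unfold IsMiddle; infer_instance

/-!
Call a vertex of `L_Γ` upper when its level is at most 2. The middle edges are exactly the
edges joining an upper to a lower vertex, so every closed walk has an even number of them.
All other edges join a generator `x_{ij}` to a generator of its own local piece, keeping the
bar. So a 6-cycle with no middle edges alternates between three generators `x_{ij}` and three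
generators that each lie in two different local pieces. Such a generator is some `a_i`, and
the three vertices of `Γ` found this way are pairwise adjacent: they form a triangle.
-/

namespace SimpleGraph.Walk

variable {V : Type*} {G : SimpleGraph V}

theorem even_countP_darts_ne_iff (f : V → Bool) {u v : V} (w : G.Walk u v) :
    Even (w.darts.countP fun d => f d.fst != f d.snd) ↔ f u = f v := by
  induction w with
  | nil => simp
  | @cons u x v _ p ih =>
    rw [darts_cons, List.countP_cons]
    revert ih
    cases f u <;> cases f x <;> cases f v <;> simp [Nat.even_add_one]

theorem even_countP_darts_ne (f : V → Bool) {u : V} (w : G.Walk u u) :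
    Even (w.darts.countP fun d => f d.fst != f d.snd) :=
  (even_countP_darts_ne_iff f w).2 rfl

end SimpleGraph.Walk

section

open SimpleGraph

variable {ι : Type*} {E : ι → ι → Prop} {lab : ι → ι → ℕ}

lemma gSeq_ne_xgen (i j : ι) (k : ℕ) (p q : ι) : gSeq i j k ≠ .xgen p q := by
  unfold gSeq; split_ifs <;> simp

lemma lvlGamma_gSeq (i j : ι) (k : ℕ) (b : Bool) :
    lvlGamma (gSeq i j k, b) = if b then 2 else 3 := by
  cases b <;> simp only [gSeq, if_true, Bool.false_eq_true, if_false] <;> split_ifs <;> rfl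

lemma eq_or_eq_of_gSeq_eq_vgen {i j a : ι} {k : ℕ} (h : gSeq i j k = .vgen a) :
    a = i ∨ a = j := by
  unfold gSeq at h; split_ifs at h <;> simp_all

def LocalEdge (E : ι → ι → Prop) (u v : GammaVert ι) : Prop :=
  ∃ i j k b, E i j ∧ u = (.xgen i j, b) ∧ v = (gSeq i j k, b)

def LocalGraph (E : ι → ι → Prop) : SimpleGraph (GammaVert ι) :=
  SimpleGraph.fromRel (LocalEdge E)

namespace LocalEdge

variable {u v w : GammaVert ι}

lemma snd_eq (h : LocalEdge E u v) : u.2 = v.2 := by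
  obtain ⟨i, j, k, b, -, rfl, rfl⟩ := h; rfl

lemma lvlGamma_eq (h : LocalEdge E u v) :
    lvlGamma u = 1 ∧ lvlGamma v = 2 ∨ lvlGamma u = 4 ∧ lvlGamma v = 3 := by
  obtain ⟨i, j, k, b, -, rfl, rfl⟩ := h
  cases b <;> rw [lvlGamma_gSeq] <;> simp [lvlGamma]

lemma not_localEdge_snd (h : LocalEdge E u v) : ¬LocalEdge E v w := by
  rintro ⟨i, j, k, b, -, rfl, -⟩
  obtain ⟨i', j', k', b', -, -, hv⟩ := h
  exact gSeq_ne_xgen i' j' k' i j (congrArg Prod.fst hv).symm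

lemma localEdge_of_adj_fst (h : LocalEdge E u v) (hadj : (LocalGraph E).Adj u w) :
    LocalEdge E u w :=
  hadj.2.resolve_right fun h' => h'.not_localEdge_snd h

lemma localEdge_of_adj_snd (h : LocalEdge E u v) (hadj : (LocalGraph E).Adj v w) :
    LocalEdge E w v :=
  hadj.2.resolve_left h.not_localEdge_snd

lemma exists_eq_vgen_of_ne (hu : LocalEdge E u w) (hv : LocalEdge E v w) (huv : u ≠ v) :
    ∃ a, w.1 = .vgen a := by
  obtain ⟨i, j, k, b, -, rfl, rfl⟩ := hu
  obtain ⟨i', j', k', b', -, rfl, hw⟩ := hv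
  simp only [Prod.mk.injEq] at hw huv
  unfold gSeq at hw ⊢
  split_ifs at hw ⊢ <;> simp_all

lemma adj_of_vgen {a a' : ι} (hv : LocalEdge E u v) (hw : LocalEdge E u w)
    (ha : v.1 = .vgen a) (ha' : w.1 = .vgen a') (hne : a ≠ a') : E a a' ∨ E a' a := by
  obtain ⟨i, j, k, b, hE, rfl, rfl⟩ := hv
  obtain ⟨i', j', k', b', -, hu, rfl⟩ := hw
  simp only [Prod.mk.injEq, GammaGen.xgen.injEq] at hu
  obtain ⟨⟨rfl, rfl⟩, rfl⟩ := hu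
  rcases eq_or_eq_of_gSeq_eq_vgen ha with rfl | rfl <;>
    rcases eq_or_eq_of_gSeq_eq_vgen ha' with rfl | rfl <;> tauto

end LocalEdge

lemma IsMiddle.symm {u v : GammaVert ι} (h : IsMiddle u v) : IsMiddle v u := by
  unfold IsMiddle at *; tauto

lemma isMiddle_or_localEdge_of_linkRelGamma {u v : GammaVert ι}
    (h : linkRelGamma E lab u v) : IsMiddle u v ∨ LocalEdge E u v ∨ LocalEdge E v u := by
  obtain ⟨t, ⟨i, j, hE, k, -, -, rfl⟩, hc⟩ := h
  rcases hc with hc | hc | hc <;> simp only [Prod.mk.injEq] at hc <;> obtain ⟨rfl, rfl⟩ := hc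
  · exact .inl (by simp [IsMiddle, lvlGamma_gSeq])
  · exact .inr (.inl ⟨i, j, k, false, hE, rfl, rfl⟩)
  · exact .inr (.inr ⟨i, j, _, true, hE, rfl, rfl⟩)

lemma isMiddle_or_localGraph_adj {u v : GammaVert ι} (h : (LinkGamma E lab).Adj u v) :
    IsMiddle u v ∨ (LocalGraph E).Adj u v := by
  obtain ⟨hne, h | h⟩ := (fromRel_adj _ _ _).1 h
  · rcases isMiddle_or_localEdge_of_linkRelGamma h with h | h | h
    · exact .inl h
    · exact .inr ⟨hne, .inl h⟩
    · exact .inr ⟨hne, .inr h⟩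
  · rcases isMiddle_or_localEdge_of_linkRelGamma h with h | h | h
    · exact .inl h.symm
    · exact .inr ⟨hne, .inr h⟩
    · exact .inr ⟨hne, .inl h⟩

lemma decide_isMiddle_of_linkGamma_adj {u v : GammaVert ι} (h : (LinkGamma E lab).Adj u v) :
    decide (IsMiddle u v) = (decide (lvlGamma u ≤ 2) != decide (lvlGamma v ≤ 2)) := by
  rcases isMiddle_or_localGraph_adj h with hm | ⟨-, h | h⟩
  · rcases id hm with ⟨h₁, h₂⟩ | ⟨h₁, h₂⟩ <;> simp [h₁, h₂, hm]
  · rcases h.lvlGamma_eq with ⟨h₁, h₂⟩ | ⟨h₁, h₂⟩ <;> simp [IsMiddle, h₁, h₂]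
  · rcases h.lvlGamma_eq with ⟨h₁, h₂⟩ | ⟨h₁, h₂⟩ <;> simp [IsMiddle, h₁, h₂]

lemma LocalGraph.not_hexagon (htf : TriangleFree E) (v : Fin 6 → GammaVert ι)
    (hv : Function.Injective v) (hadj : ∀ i, (LocalGraph E).Adj (v i) (v (i + 1))) : False := by
  -- rotate the hexagon so that `v 0` is an `x`-generator
  wlog h01 : LocalEdge E (v 0) (v 1) generalizing v
  · have h10 : LocalEdge E (v 1) (v 0) := (hadj 0).2.resolve_left h01
    exact this (v ∘ (· + 1)) (hv.comp (add_left_injective 1))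
      (fun i => by simpa [add_assoc] using hadj (i + 1)) (h10.localEdge_of_adj_fst (hadj 1))
  have h21 : LocalEdge E (v 2) (v 1) := h01.localEdge_of_adj_snd (hadj 1)
  have h23 : LocalEdge E (v 2) (v 3) := h21.localEdge_of_adj_fst (hadj 2)
  have h43 : LocalEdge E (v 4) (v 3) := h23.localEdge_of_adj_snd (hadj 3)
  have h45 : LocalEdge E (v 4) (v 5) := h43.localEdge_of_adj_fst (hadj 4)
  have h05 : LocalEdge E (v 0) (v 5) := h45.localEdge_of_adj_snd (hadj 5)
  obtain ⟨a₀, ha₀⟩ := h01.exists_eq_vgen_of_ne h21 (hv.ne (by decide))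
  obtain ⟨a₁, ha₁⟩ := h23.exists_eq_vgen_of_ne h43 (hv.ne (by decide))
  obtain ⟨a₂, ha₂⟩ := h45.exists_eq_vgen_of_ne h05 (hv.ne (by decide))
  have h₀₁ : a₀ ≠ a₁ := fun h => hv.ne (show (1 : Fin 6) ≠ 3 by decide)
    (Prod.ext (by rw [ha₀, ha₁, h]) (h21.snd_eq.symm.trans h23.snd_eq))
  have h₁₂ : a₁ ≠ a₂ := fun h => hv.ne (show (3 : Fin 6) ≠ 5 by decide)
    (Prod.ext (by rw [ha₁, ha₂, h]) (h43.snd_eq.symm.trans h45.snd_eq))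
  have h₀₂ : a₀ ≠ a₂ := fun h => hv.ne (show (1 : Fin 6) ≠ 5 by decide)
    (Prod.ext (by rw [ha₀, ha₂, h]) (h01.snd_eq.symm.trans h05.snd_eq))
  exact htf ⟨a₀, a₁, a₂, h₀₁, h₀₂, h₁₂, h21.adj_of_vgen h23 ha₀ ha₁ h₀₁,
    h43.adj_of_vgen h45 ha₁ ha₂ h₁₂, h01.adj_of_vgen h05 ha₀ ha₂ h₀₂⟩

lemma LocalGraph.not_cycleGraph_six_isContained (htf : TriangleFree E) :
    ¬cycleGraph 6 ⊑ LocalGraph E := by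
  rintro ⟨f⟩
  exact LocalGraph.not_hexagon htf f f.injective fun i =>
    f.toHom.map_adj (by simp [cycleGraph_adj])

lemma LinkGamma.exists_isMiddle_of_isCycle (htf : TriangleFree E) {v : GammaVert ι}
    {w : (LinkGamma E lab).Walk v v} (hc : w.IsCycle) (hl : w.length = 6) :
    ∃ d ∈ w.darts, IsMiddle d.fst d.snd := by
  by_contra! h
  have hsub : ∀ e ∈ w.edges, e ∈ (LocalGraph E).edgeSet := by
    intro e he
    obtain ⟨d, hd, rfl⟩ := List.mem_map.1 he
    exact (isMiddle_or_localGraph_adj d.adj).resolve_left (h d hd)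
  exact LocalGraph.not_cycleGraph_six_isContained htf <|
    (cycleGraph_isContained_iff (by norm_num)).2
      ⟨v, w.transfer _ hsub, hc.transfer hsub, by rw [Walk.length_transfer, hl]⟩

end

theorem six_cycles_two_middle_general {ι : Type*}
    (E : ι → ι → Prop) (lab : ι → ι → ℕ)
    (htf : TriangleFree E) :
    ∀ (v : GammaVert ι) (w : (LinkGamma E lab).Walk v v),
      w.IsCycle → w.length = 6 →
        2 ≤ (w.darts.filter
              (fun d => decide (IsMiddle d.toProd.1 d.toProd.2))).length := by
  intro v w hc hl
  obtain ⟨d, hd, hm⟩ := LinkGamma.exists_isMiddle_of_isCycle htf hc hl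
  have hpos : 0 < (w.darts.filter fun d => decide (IsMiddle d.fst d.snd)).length :=
    List.length_pos_of_mem (List.mem_filter.2 ⟨hd, decide_eq_true hm⟩)
  have hcount : (w.darts.filter fun d => decide (IsMiddle d.fst d.snd)).length =
      w.darts.countP fun d => decide (lvlGamma d.fst ≤ 2) != decide (lvlGamma d.snd ≤ 2) := by
    rw [← List.countP_eq_length_filter]
    exact List.countP_congr fun d _ => by rw [decide_isMiddle_of_linkGamma_adj d.adj]
  obtain ⟨n, hn⟩ := w.even_countP_darts_ne fun u => decide (lvlGamma u ≤ 2)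
  rw [hcount] at hpos ⊢
  omega

/-- If `Γ` is a finite directed simple graph with edge labels at least 3
and no triangles, then every embedded cycle of length 6 in `L_Γ` contains at least 2
middle edges. -/
theorem six_cycles_two_middle {ι : Type*} [Fintype ι] [DecidableEq ι]
    (E : ι → ι → Prop) (lab : ι → ι → ℕ)
    (hirr : ∀ i, ¬E i i) (hsimple : ∀ i j, E i j → ¬E j i)
    (hlab : ∀ i j, E i j → 3 ≤ lab i j) (htf : TriangleFree E) :
    ∀ (v : GammaVert ι) (w : (LinkGamma E lab).Walk v v),
      w.IsCycle → w.length = 6 →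
        2 ≤ (w.darts.filter
              (fun d => decide (IsMiddle d.toProd.1 d.toProd.2))).length :=
  six_cycles_two_middle_general E lab htf
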